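/- arXiv:0804.3667 — 2 statements merged into one kernel-verified Lean document; each statement's English description precedes it below -/
import Mathlib

section
/- In the setup below, let Z be the set of vertices v_i of S such that b_i(x) = 0. Then |Z| ≤ d. -/
open scoped BigOperators Pointwise

noncomputable section

/-- A point of `ℝ^m` with integer coordinates (a lattice point). -/
def IsLatticePoint {m : ℕ} (v : Fin m → ℝ) : Prop := ∀ i, ∃ z : ℤ, v i = (z : ℝ)

/-- `P` is a lattice polytope in `ℝ^m`: the convex hull of a nonempty finite set of
lattice points. -/
def IsLatticePolytope {m : ℕ} (P : Set (Fin m → ℝ)) : Prop :=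
  ∃ V : Finset (Fin m → ℝ), V.Nonempty ∧ (∀ v ∈ V, IsLatticePoint v) ∧
    P = convexHull ℝ (V : Set (Fin m → ℝ))

/-- The number of lattice points contained in a subset of `ℝ^m`. -/
def latticePointCount {m : ℕ} (A : Set (Fin m → ℝ)) : ℕ :=
  Set.ncard {z : Fin m → ℤ | (fun i => (z i : ℝ)) ∈ A}

/-- `h` is the `h^*`-polynomial of the full-dimensional lattice polytope `P ⊆ ℝ^n`:
its coefficients are nonnegative, it has degree at most `n`, and the Ehrhart counting
function of `P` is given by `|mP ∩ ℤ^n| = ∑_i h_i * C(n + m - i, n)`, which is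
equivalent to `∑_m |mP ∩ ℤ^n| t^m = h(t)/(1-t)^{n+1}`. -/
def IsHStarPoly {n : ℕ} (P : Set (Fin n → ℝ)) (h : Polynomial ℤ) : Prop :=
  h.natDegree ≤ n ∧ (∀ i, 0 ≤ h.coeff i) ∧
    ∀ m : ℕ, (latticePointCount ((m : ℝ) • P) : ℤ) =
      ∑ i ∈ Finset.range (n + 1), h.coeff i * ((n + m - i).choose n : ℤ)

/-- The normalized volume of a (full-dimensional) polytope in `ℝ^m`:
`m!` times its Euclidean volume. -/
def normVol {m : ℕ} (P : Set (Fin m → ℝ)) : ℝ :=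
  (Nat.factorial m : ℝ) * (MeasureTheory.volume P).toReal

/-- The point of `ℝ^s` over which the `j`-th summand of a Cayley sum sits:
`0` for `j = 0`, and the standard basis vector `e_j` for `j = 1, …, s`. -/
def cayleyVertex (s : ℕ) (j : Fin (s + 1)) : Fin s → ℝ :=
  fun i => if (i : ℕ) + 1 = (j : ℕ) then 1 else 0

/-- The Cayley sum `P_0 * ⋯ * P_s ⊆ ℝ^q × ℝ^s` of polytopes `P_0, …, P_s ⊆ ℝ^q`:
the convex hull of `(P_0 × {0}) ∪ (P_1 × {e_1}) ∪ ⋯ ∪ (P_s × {e_s})`. -/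
def CayleySum {q s : ℕ} (Ps : Fin (s + 1) → Set (Fin q → ℝ)) :
    Set ((Fin q → ℝ) × (Fin s → ℝ)) :=
  convexHull ℝ (⋃ j : Fin (s + 1), (fun p => (p, cayleyVertex s j)) '' Ps j)

/-- A lattice point of `ℝ^q × ℝ^s`. -/
def IsLatticePointPair {q s : ℕ} (v : (Fin q → ℝ) × (Fin s → ℝ)) : Prop :=
  IsLatticePoint v.1 ∧ IsLatticePoint v.2

/-- An affine isomorphism `ℝ^n ≅ ℝ^q × ℝ^s` is a `ℤ`-affine linear change of coordinates
if it identifies the lattice `ℤ^n` with the lattice `ℤ^q × ℤ^s`. -/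
def IsLatticeEquiv {n q s : ℕ} (T : (Fin n → ℝ) ≃ᵃ[ℝ] (Fin q → ℝ) × (Fin s → ℝ)) : Prop :=
  ∀ v : Fin n → ℝ, IsLatticePoint v ↔ IsLatticePointPair (T v)

/-!
Write `x = ∑ bᵢ vᵢ`. All points of `P` have last coordinate `1`, so `∑ bᵢ = n - d + 1`; if more
than `d` of the `bᵢ` vanished, at most `n - d` would be nonzero and some `b_j > 1`. With
`β = 1 / b_j`, the lattice point
`x - v_j = (1 - β) • x + β • (x - b_j v_j)`
is the sum of a point of `relint ((1 - β)(n - d + 1) P)` and a point of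
`(β (n - d + 1 - b_j)) P`, hence lies in `relint ((n - d) P)`: a contradiction.
-/

theorem intrinsicInterior_mono_of_affineSpan_eq {𝕜 V P : Type*} [Ring 𝕜] [AddCommGroup V]
    [Module 𝕜 V] [TopologicalSpace P] [AddTorsor V P] {s t : Set P} (hst : s ⊆ t)
    (hspan : affineSpan 𝕜 s = affineSpan 𝕜 t) :
    intrinsicInterior 𝕜 s ⊆ intrinsicInterior 𝕜 t := by
  unfold intrinsicInterior
  rw [hspan]
  exact Set.image_mono (interior_mono (Set.preimage_mono hst))

theorem AffineSubspace.map_homothety_of_mem {k V P : Type*} [CommRing k] [AddCommGroup V]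
    [Module k V] [AddTorsor V P] {s : AffineSubspace k P} {c : P} (hc : c ∈ s) {r : k}
    (hr : IsUnit r) : s.map (AffineMap.homothety c r) = s := by
  rw [← s.shift_eq_map_homothety c hr, s.shift_eq ⟨c, hc⟩]
  simp

theorem Convex.sum_smul_mem_smul {E ι : Type*} [AddCommGroup E] [Module ℝ E] {C : Set E}
    (hC : Convex ℝ C) (hne : C.Nonempty) {s : Finset ι} {c : ι → ℝ} {z : ι → E}
    (hc : ∀ i ∈ s, 0 ≤ c i) (hz : ∀ i ∈ s, z i ∈ C) :
    ∑ i ∈ s, c i • z i ∈ (∑ i ∈ s, c i) • C := by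
  rcases (Finset.sum_nonneg hc).eq_or_lt with h0 | hpos
  · have hc0 : ∀ i ∈ s, c i = 0 := (Finset.sum_eq_zero_iff_of_nonneg hc).1 h0.symm
    rw [← h0, Set.zero_smul_set hne, Finset.sum_eq_zero fun i hi => by simp [hc0 i hi]]
    rfl
  · refine ⟨s.centerMass c z, hC.centerMass_mem hc hpos hz, ?_⟩
    change (∑ i ∈ s, c i) • ((∑ i ∈ s, c i)⁻¹ • _) = _
    rw [smul_smul, mul_inv_cancel₀ hpos.ne', one_smul]

section

variable {E : Type*} [NormedAddCommGroup E] [NormedSpace ℝ E] [FiniteDimensional ℝ E]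

theorem intrinsicInterior_smul {r : ℝ} (hr : r ≠ 0) (s : Set E) :
    intrinsicInterior ℝ (r • s) = r • intrinsicInterior ℝ s := by
  rw [← Set.image_smul, ← Set.image_smul]
  exact (LinearEquiv.smulOfNeZero ℝ E r hr).toAffineEquiv.intrinsicInterior_image s

theorem Convex.combo_intrinsicInterior_self_mem_intrinsicInterior {s : Set E} (hs : Convex ℝ s)
    {x y : E} (hx : x ∈ intrinsicInterior ℝ s) (hy : y ∈ s) {a b : ℝ} (ha : 0 < a) (hb : 0 ≤ b)
    (hab : a + b = 1) : a • x + b • y ∈ intrinsicInterior ℝ s := by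
  obtain rfl : b = 1 - a := by linarith
  -- the homothety with centre `y` and ratio `a` maps `s` into itself and fixes its affine span
  set h : E ≃ᵃ[ℝ] E := AffineEquiv.homothetyUnitsMulHom y (Units.mk0 a ha.ne')
  have hh : ∀ z, h z = a • z + (1 - a) • y := by
    intro z
    simp [h, AffineMap.homothety_apply]
    module
  have himage : h '' s ⊆ s := by
    rintro _ ⟨z, hz, rfl⟩
    rw [hh]
    exact hs hz hy ha.le hb hab
  have hspan : affineSpan ℝ (h '' s) = affineSpan ℝ s := by
    calc affineSpan ℝ (h '' s) = (affineSpan ℝ s).map (AffineMap.homothety y a) :=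
          (AffineSubspace.map_span _ s).symm
      _ = affineSpan ℝ s :=
          (affineSpan ℝ s).map_homothety_of_mem (subset_affineSpan ℝ s hy) (Units.mk0 a ha.ne').isUnit
  rw [← hh]
  refine intrinsicInterior_mono_of_affineSpan_eq himage hspan ?_
  rw [AffineEquiv.intrinsicInterior_image]
  exact Set.mem_image_of_mem h hx

theorem Convex.add_mem_intrinsicInterior_smul {C : Set E} (hC : Convex ℝ C) {s t : ℝ}
    (hs : 0 < s) (ht : 0 ≤ t) {a p : E} (ha : a ∈ intrinsicInterior ℝ (s • C))
    (hp : p ∈ t • C) : a + p ∈ intrinsicInterior ℝ ((s + t) • C) := by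
  have hst : 0 < s + t := by linarith
  rw [intrinsicInterior_smul hs.ne'] at ha
  obtain ⟨a, ha, rfl⟩ := ha
  obtain ⟨p, hp, rfl⟩ := hp
  rw [intrinsicInterior_smul hst.ne']
  refine ⟨(s / (s + t)) • a + (t / (s + t)) • p,
    hC.combo_intrinsicInterior_self_mem_intrinsicInterior ha hp (by positivity) (by positivity)
      (by field_simp), ?_⟩
  simp only [smul_add, smul_smul]
  field_simp

theorem Convex.sum_smul_sub_mem_intrinsicInterior_smul {ι : Type*} [Fintype ι] {C : Set E}
    (hC : Convex ℝ C) {v : ι → E} (hv : ∀ i, v i ∈ C) {c : ι → ℝ} (hc : ∀ i, 0 ≤ c i) {K : ℝ}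
    (hsum : ∑ i, c i = K + 1) (hx : ∑ i, c i • v i ∈ intrinsicInterior ℝ ((K + 1) • C)) {j : ι}
    (hj : 1 < c j) : ∑ i, c i • v i - v j ∈ intrinsicInterior ℝ (K • C) := by
  classical
  set x := ∑ i, c i • v i
  set β := (c j)⁻¹
  have hβ : β * c j = 1 := inv_mul_cancel₀ (by linarith)
  have hβ_lt : β < 1 := inv_lt_one_of_one_lt₀ hj
  have hrest : x - c j • v j ∈ (K + 1 - c j) • C := by
    rw [← hsum, ← Finset.sum_erase_eq_sub (Finset.mem_univ j),
      ← Finset.sum_erase_eq_sub (Finset.mem_univ j)]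
    exact hC.sum_smul_mem_smul ⟨v j, hv j⟩ (fun i _ => hc i) (fun i _ => hv i)
  have hrest_nonneg : 0 ≤ K + 1 - c j := by
    rw [← hsum, ← Finset.sum_erase_eq_sub (Finset.mem_univ j)]
    exact Finset.sum_nonneg fun i _ => hc i
  have hx' : (1 - β) • x ∈ intrinsicInterior ℝ (((1 - β) * (K + 1)) • C) := by
    rw [mul_smul, intrinsicInterior_smul (by linarith)]
    exact Set.smul_mem_smul_set hx
  have hrest' : β • (x - c j • v j) ∈ (β * (K + 1 - c j)) • C := by
    rw [mul_smul]
    exact Set.smul_mem_smul_set hrest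
  have hK : (1 - β) * (K + 1) + β * (K + 1 - c j) = K := by linear_combination -hβ
  have hx_eq : x - v j = (1 - β) • x + β • (x - c j • v j) := by
    rw [smul_sub, smul_smul, hβ, one_smul]
    module
  rw [hx_eq, ← hK]
  exact hC.add_mem_intrinsicInterior_smul (by nlinarith) (by positivity) hx' hrest'

end

theorem exists_one_lt_of_card_le_ncard_zero_add {ι : Type*} [Fintype ι] {f : ι → ℝ} {k : ℕ}
    (hcard : Fintype.card ι ≤ {i | f i = 0}.ncard + k) (hsum : (k : ℝ) < ∑ i, f i) :
    ∃ i, 1 < f i := by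
  classical
  have hsplit := Finset.card_filter_add_card_filter_not (s := Finset.univ) fun i => f i = 0
  rw [show {i | f i = 0} = ↑(Finset.univ.filter fun i => f i = 0) by ext; simp,
    Set.ncard_coe_finset] at hcard
  obtain ⟨i, -, hi⟩ := Finset.exists_lt_of_sum_lt (s := Finset.univ.filter fun i => f i ≠ 0)
    (f := fun _ => (1 : ℝ)) (g := f) <| by
      rw [Finset.sum_filter_ne_zero, Finset.sum_const, nsmul_one]
      refine lt_of_le_of_lt ?_ hsum
      exact_mod_cast (by rw [Finset.card_univ] at hsplit; omega)
  exact ⟨i, hi⟩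

theorem IsLatticePoint.sub {m : ℕ} {u w : Fin m → ℝ} (hu : IsLatticePoint u)
    (hw : IsLatticePoint w) : IsLatticePoint (u - w) := fun i => by
  obtain ⟨a, ha⟩ := hu i
  obtain ⟨b, hb⟩ := hw i
  exact ⟨a - b, by simp [ha, hb]⟩

theorem statement5_general (n d : ℕ) (P : Set (Fin (n + 1) → ℝ))
    (v : Fin (n + 1) → Fin (n + 1) → ℝ) (b : (Fin (n + 1) → ℝ) → Fin (n + 1) → ℝ)
    (x : Fin (n + 1) → ℝ)
    (hP : IsLatticePolytope P)
    (hheight : ∀ p ∈ P, p (Fin.last n) = 1)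
    (hNoInt : ∀ z : Fin (n + 1) → ℤ,
      (fun i => (z i : ℝ)) ∉ intrinsicInterior ℝ (((n - d : ℕ) : ℝ) • P))
    (hxint : IsLatticePoint x)
    (hxmem : x ∈ intrinsicInterior ℝ (((n - d + 1 : ℕ) : ℝ) • P))
    (hvint : ∀ i, IsLatticePoint (v i))
    (hvmem : ∀ i, v i ∈ P)
    (hb : ∀ y : Fin (n + 1) → ℝ, y = ∑ i, b y i • v i)
    (hxcone : ∀ i, 0 ≤ b x i)
    :
    Set.ncard {i : Fin (n + 1) | b x i = 0} ≤ d := by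
  by_contra! hZ
  set K : ℝ := ((n - d : ℕ) : ℝ)
  have hPconv : Convex ℝ P := by
    obtain ⟨V, -, -, rfl⟩ := hP
    exact convex_convexHull ℝ _
  rw [show ((n - d + 1 : ℕ) : ℝ) = K + 1 by push_cast; rfl] at hxmem
  have hsum : ∑ i, b x i = K + 1 := by
    obtain ⟨p, hp, rfl⟩ := intrinsicInterior_subset hxmem
    simpa [Finset.sum_apply, hheight _ hp, hheight _ (hvmem _)] using
      (congrFun (hb ((K + 1) • p)) (Fin.last n)).symm
  obtain ⟨j, hj⟩ : ∃ j, 1 < b x j :=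
    exists_one_lt_of_card_le_ncard_zero_add (k := n - d) (by rw [Fintype.card_fin]; omega)
      (by rw [hsum]; linarith)
  have hmem : x - v j ∈ intrinsicInterior ℝ (K • P) := by
    rw [hb x] at hxmem ⊢
    exact hPconv.sum_smul_sub_mem_intrinsicInterior_smul hvmem hxcone hsum hxmem hj
  choose z hz using hxint.sub (hvint j)
  exact hNoInt z (by rwa [show (fun i => (z i : ℝ)) = x - v j from funext fun i => (hz i).symm])

/-- (Lemma 2.2.) Let `Z` be the set of vertices `v_i` of `S` such that
`b_i(x) = 0`.  Then `|Z| ≤ d`. -/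
theorem statement5 (n d : ℕ) (P : Set (Fin (n + 1) → ℝ))
    (v : Fin (n + 1) → Fin (n + 1) → ℝ) (b : (Fin (n + 1) → ℝ) → Fin (n + 1) → ℝ)
    (x : Fin (n + 1) → ℝ)
    (hP : IsLatticePolytope P)
    (hPdim : Module.finrank ℝ (vectorSpan ℝ P) = n)
    (hheight : ∀ p ∈ P, p (Fin.last n) = 1)
    (hdn : d ≤ n)
    (hNoInt : ∀ z : Fin (n + 1) → ℤ,
      (fun i => (z i : ℝ)) ∉ intrinsicInterior ℝ (((n - d : ℕ) : ℝ) • P))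
    (hxint : IsLatticePoint x)
    (hxmem : x ∈ intrinsicInterior ℝ (((n - d + 1 : ℕ) : ℝ) • P))
    (hvint : ∀ i, IsLatticePoint (v i))
    (hvmem : ∀ i, v i ∈ P)
    (hvaff : AffineIndependent ℝ v)
    (hb : ∀ y : Fin (n + 1) → ℝ, y = ∑ i, b y i • v i)
    (hxcone : ∀ i, 0 ≤ b x i)
    :
    Set.ncard {i : Fin (n + 1) | b x i = 0} ≤ d :=
  statement5_general n d P v b x hP hheight hNoInt hxint hxmem hvint hvmem hb hxcone

end
end

section
/- In the setup below, for any point y in the cone σ spanned by P, one has |V^−(y)| ≤ |Z^+(y)|. In particular |V^−(y)| ≤ |Z| ≤ d. -/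
open scoped BigOperators Pointwise

noncomputable section

/-!
Write `σ` for the cone over `P` and `h` for the height `x_{n+1}`. An interior point of `σ` at
height `k > 0` lies in the relative interior of `kP`, so by the definition of the degree `σ` has
no interior lattice point at height `n - d`, while `x = ∑ bᵢ(x) vᵢ` is one at height
`∑ bᵢ(x) = n - d + 1`. Both bounds come from stepping down one level from `x`. If
`|V⁻(y)| > |Z⁺(y)|`, choose `W ⊆ V⁻(y)` with `|W| = |Z⁺(y)| + 1`; then
`x + ∑_{Z⁺(y)} vᵢ - ∑_W vⱼ` has height `n - d`. If `|Z| > d`, then some `bᵢ(x) > 1`, since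
otherwise at least `n - d + 1` coordinates of `x` are nonzero, and `x - vᵢ` has height `n - d`.

That these lattice points are interior is a separation argument, carried out once and for all in
`PointedCone.sum_smul_mem_interior`.
-/

namespace PointedCone

variable {E : Type*} [NormedAddCommGroup E] [NormedSpace ℝ E] {C : PointedCone ℝ E} {x u : E}

theorem add_mem_interior (hx : x ∈ interior (C : Set E)) (hu : u ∈ C) :
    x + u ∈ interior (C : Set E) :=
  interior_maximal (fun a ha => by simpa using C.add_mem (interior_subset ha) hu)
    (isOpen_interior.preimage (continuous_sub_right u)) (by simpa using hx)

theorem smul_mem_interior {t : ℝ} (ht : 0 < t) (hx : x ∈ interior (C : Set E)) :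
    t • x ∈ interior (C : Set E) :=
  interior_maximal
    (fun a ha => by simpa [smul_smul, ht.ne'] using C.smul_mem ht.le (interior_subset ha))
    (isOpen_interior.preimage (continuous_const_smul t⁻¹))
    (by simpa [smul_smul, ht.ne'] using hx)

theorem exists_dual_of_notMem_interior {z : E} (hx : x ∈ interior (C : Set E)) (hzC : z ∈ C)
    (hz : z ∉ interior (C : Set E)) :
    ∃ f : StrongDual ℝ E, (∀ u ∈ C, f u ≤ 0) ∧ f z = 0 ∧ f x < 0 := by
  obtain ⟨f, hf⟩ := geometric_hahn_banach_open_point C.convex.interior isOpen_interior hz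
  have hxz := hf x hx
  have hC : ∀ u ∈ C, f u ≤ 0 := by
    intro u hu
    by_contra! hpos
    have := hf _ (add_mem_interior hx (C.smul_mem (div_pos (sub_pos.2 hxz) hpos).le hu))
    simp [hpos.ne'] at this
  have hz0 : 0 ≤ f z := by
    by_contra! hneg
    have hfx : f x < 0 := hxz.trans hneg
    have := hf _ (smul_mem_interior (div_pos_of_neg_of_neg hneg hfx) hx)
    simp [hfx.ne] at this
  exact ⟨f, hC, le_antisymm (hC z hzC) hz0, hxz.trans_le (hC z hzC)⟩

variable {ι : Type*} [Fintype ι] {v : ι → E}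

theorem sum_smul_mem (hv : ∀ i, v i ∈ C) {c : ι → ℝ} (hc : ∀ i, 0 ≤ c i) :
    ∑ i, c i • v i ∈ C :=
  C.sum_mem fun i _ => C.smul_mem (hc i) (hv i)

theorem sum_smul_mem_interior (hv : ∀ i, v i ∈ C) {a c e : ι → ℝ}
    (ha : ∑ i, a i • v i ∈ interior (C : Set E)) (he : ∑ i, e i • v i ∈ C) (hc : ∀ i, 0 ≤ c i)
    (hzero : ∀ i, c i = 0 → e i ≤ 0 ∧ (0 < a i → e i < 0)) :
    ∑ i, c i • v i ∈ interior (C : Set E) := by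
  -- A supporting functional `f ≤ 0` vanishing at `∑ cᵢ vᵢ` kills every `vᵢ` with `cᵢ > 0`. Being
  -- negative at `∑ aᵢ vᵢ`, it has `f vᵢ < 0` for some `i` with `aᵢ > 0`, so `cᵢ = 0` and `eᵢ < 0`,
  -- and then `f` is positive at `∑ eᵢ vᵢ ∈ C`.
  by_contra hint
  obtain ⟨f, hfC, hfz, hfx⟩ := exists_dual_of_notMem_interior ha (sum_smul_mem hv hc) hint
  have hf : ∀ w : ι → ℝ, f (∑ i, w i • v i) = ∑ i, w i * f (v i) := by simp
  have hL : ∀ i, f (v i) ≤ 0 := fun i => hfC _ (hv i)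
  have hcL : ∀ i, c i * f (v i) = 0 := fun i =>
    (Finset.sum_eq_zero_iff_of_nonpos fun i _ => mul_nonpos_of_nonneg_of_nonpos (hc i) (hL i)).1
      (by rw [← hf, hfz]) i (Finset.mem_univ i)
  have heL : ∀ i, 0 ≤ e i * f (v i) := fun i => by
    rcases (hL i).lt_or_eq with hlt | heq
    · exact mul_nonneg_of_nonpos_of_nonpos
        (hzero i ((mul_eq_zero.1 (hcL i)).resolve_right hlt.ne)).1 (hL i)
    · simp [heq]
  obtain ⟨i₀, -, hi₀⟩ : ∃ i ∈ Finset.univ, a i * f (v i) < 0 :=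
    Finset.exists_lt_of_sum_lt (by rw [Finset.sum_const_zero, ← hf]; exact hfx)
  have hLi₀ : f (v i₀) < 0 := (hL i₀).lt_of_ne fun h => by simp [h] at hi₀
  have hai₀ : 0 < a i₀ := pos_of_mul_neg_left hi₀ (hL i₀)
  have hei₀ : e i₀ < 0 := (hzero i₀ ((mul_eq_zero.1 (hcL i₀)).resolve_right hLi₀.ne)).2 hai₀
  have hfe := hfC _ he
  rw [hf] at hfe
  exact hfe.not_gt <| Finset.sum_pos' (fun i _ => heL i)
    ⟨i₀, Finset.mem_univ _, mul_pos_of_neg_of_neg hei₀ hLi₀⟩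

end PointedCone

section HeightOne

variable {E : Type*} [NormedAddCommGroup E] [NormedSpace ℝ E] {h : StrongDual ℝ E} {P : Set E}
  {u : E} {c : ℝ}

theorem eq_zero_or_mem_convexConeHull_of_mem_hull (hu : u ∈ PointedCone.hull ℝ P) :
    u = 0 ∨ u ∈ ConvexCone.hull ℝ P := by
  induction hu using Submodule.span_induction with
  | mem w hw => exact .inr (ConvexCone.subset_hull hw)
  | zero => exact .inl rfl
  | add w w' _ _ hw hw' =>
    rcases hw with rfl | hw
    · simpa using hw'
    rcases hw' with rfl | hw'
    · simpa using Or.inr hw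
    exact .inr ((ConvexCone.hull ℝ P).add_mem hw hw')
  | smul t w _ hw =>
    rcases hw with rfl | hw
    · simp
    rcases (t.2 : (0 : ℝ) ≤ t).eq_or_lt with ht | ht
    · left
      rw [show t = 0 from Subtype.ext ht.symm, zero_smul]
    · exact .inr ((ConvexCone.hull ℝ P).smul_mem ht hw)

variable (hP1 : ∀ p ∈ P, h p = 1)
include hP1

theorem mem_smul_of_mem_hull (hP : Convex ℝ P) (hu : u ∈ PointedCone.hull ℝ P) (hc : 0 < c)
    (huc : h u = c) : u ∈ c • P := by
  rcases eq_zero_or_mem_convexConeHull_of_mem_hull hu with rfl | hu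
  · simp [hc.ne] at huc
  obtain ⟨r, -, p, hp, rfl⟩ := (ConvexCone.mem_hull_of_convex hP).1 hu
  simp only [map_smul, hP1 p hp, smul_eq_mul, mul_one] at huc
  exact huc ▸ Set.smul_mem_smul_set hp

theorem apply_eq_of_mem_affineSpan_smul (hu : u ∈ affineSpan ℝ (c • P)) : h u = c := by
  have : affineSpan ℝ (c • P) ≤ AffineSubspace.comap h.toAffineMap (AffineSubspace.mk' c ⊥) := by
    rw [affineSpan_le]
    rintro _ ⟨p, hp, rfl⟩
    simp [hP1 p hp]
  simpa [sub_eq_zero] using this hu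

theorem vectorSpan_eq_ker_of_finrank [FiniteDimensional ℝ E] (hPne : P.Nonempty)
    (hdim : Module.finrank ℝ (vectorSpan ℝ P) + 1 = Module.finrank ℝ E) :
    vectorSpan ℝ P = LinearMap.ker (h : E →ₗ[ℝ] ℝ) := by
  have hle : vectorSpan ℝ P ≤ LinearMap.ker (h : E →ₗ[ℝ] ℝ) := by
    rw [vectorSpan_def, Submodule.span_le]
    rintro _ ⟨p, hp, q, hq, rfl⟩
    simp [hP1 p hp, hP1 q hq]
  obtain ⟨p, hp⟩ := hPne
  have hsurj : LinearMap.range (h : E →ₗ[ℝ] ℝ) = ⊤ :=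
    LinearMap.range_eq_top.2 fun r => ⟨r • p, by simp [hP1 p hp]⟩
  have hrank := LinearMap.finrank_range_add_finrank_ker (h : E →ₗ[ℝ] ℝ)
  rw [hsurj, finrank_top, Module.finrank_self] at hrank
  exact Submodule.eq_of_le_of_finrank_le hle (by omega)

theorem mem_affineSpan_smul (hspan : vectorSpan ℝ P = LinearMap.ker (h : E →ₗ[ℝ] ℝ))
    (hPne : P.Nonempty) (hc : c ≠ 0) (hu : h u = c) : u ∈ affineSpan ℝ (c • P) := by
  obtain ⟨p, hp⟩ := hPne
  have hdir : u - c • p ∈ vectorSpan ℝ (c • P) := by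
    have himage : (c • LinearMap.id : E →ₗ[ℝ] E).toAffineMap '' P = c • P := by
      simp [Set.image_smul]
    rw [← himage, ← AffineMap.map_vectorSpan, hspan]
    exact ⟨c⁻¹ • u - p, by simp [hP1 p hp, hu, hc], by simp [smul_sub, hc]⟩
  have := AffineSubspace.vadd_mem_of_mem_direction (by rwa [direction_affineSpan])
    (subset_affineSpan ℝ _ (Set.smul_mem_smul_set hp) : c • p ∈ affineSpan ℝ (c • P))
  rwa [vadd_eq_add, sub_add_cancel] at this

theorem mem_interior_hull_of_mem_intrinsicInterior
    (hspan : vectorSpan ℝ P = LinearMap.ker (h : E →ₗ[ℝ] ℝ)) (hc : 0 < c) {x : E}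
    (hx : x ∈ intrinsicInterior ℝ (c • P)) : x ∈ interior (PointedCone.hull ℝ P : Set E) := by
  obtain ⟨q, hq, rfl⟩ := mem_intrinsicInterior.1 hx
  have hPne : P.Nonempty := by
    by_contra hP
    simp [Set.not_nonempty_iff_eq_empty.1 hP] at hx
  obtain ⟨U, hU, hUP⟩ := (mem_nhds_subtype _ q _).1 (mem_interior_iff_mem_nhds.1 hq)
  have hqc : h q = c := apply_eq_of_mem_affineSpan_smul hP1 q.2
  -- Radial projection to the hyperplane `h = c` is continuous near `q` and fixes `q`.
  set g : E → E := fun w => (c / h w) • w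
  have hg : ContinuousAt g q :=
    (continuousAt_const.div h.continuous.continuousAt (by rw [hqc]; exact hc.ne')).smul
      continuousAt_id
  have hgq : g q = q := by simp [g, hqc, hc.ne']
  have hgU : g ⁻¹' U ∈ nhds (q : E) := hg.preimage_mem_nhds (by rwa [hgq])
  have hpos : {w | 0 < h w} ∈ nhds (q : E) :=
    (isOpen_lt continuous_const h.continuous).mem_nhds (by simpa [hqc] using hc)
  rw [mem_interior_iff_mem_nhds]
  refine Filter.mem_of_superset (Filter.inter_mem hgU hpos) fun w ⟨hwU, (hw : 0 < h w)⟩ => ?_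
  have hgw : h (g w) = c := by simp only [g, map_smul, smul_eq_mul, div_mul_cancel₀ _ hw.ne']
  obtain ⟨p, hp, hpw⟩ : g w ∈ c • P :=
    hUP (show (⟨g w, mem_affineSpan_smul hP1 hspan hPne hc.ne' hgw⟩ : affineSpan ℝ (c • P)) ∈ _
      from hwU)
  have hw_eq : w = (h w / c) • g w := by
    simp only [g, smul_smul]
    rw [div_mul_div_cancel₀ hc.ne', div_self hw.ne', one_smul]
  rw [hw_eq, ← hpw, smul_smul]
  exact (PointedCone.hull ℝ P).smul_mem (by positivity) (PointedCone.subset_hull hp)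

theorem mem_intrinsicInterior_of_mem_interior_hull (hP : Convex ℝ P) (hc : 0 < c)
    (hu : u ∈ interior (PointedCone.hull ℝ P : Set E)) (huc : h u = c) :
    u ∈ intrinsicInterior ℝ (c • P) := by
  have hslice : ∀ w ∈ affineSpan ℝ (c • P), w ∈ interior (PointedCone.hull ℝ P : Set E) →
      w ∈ c • P := fun w hw hwint =>
    mem_smul_of_mem_hull hP1 hP (interior_subset hwint) hc (apply_eq_of_mem_affineSpan_smul hP1 hw)
  have huP : u ∈ c • P := mem_smul_of_mem_hull hP1 hP (interior_subset hu) hc huc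
  refine mem_intrinsicInterior.2 ⟨⟨u, subset_affineSpan ℝ _ huP⟩, ?_, rfl⟩
  exact interior_maximal (t := Subtype.val ⁻¹' interior (PointedCone.hull ℝ P : Set E))
    (fun w hw => hslice w w.2 hw) (isOpen_interior.preimage continuous_subtype_val) hu

end HeightOne

theorem IsLatticePolytope.convex {m : ℕ} {P : Set (Fin m → ℝ)} (hP : IsLatticePolytope P) :
    Convex ℝ P := by
  obtain ⟨V, -, -, rfl⟩ := hP
  exact convex_convexHull ℝ _

theorem IsLatticePolytope.nonempty {m : ℕ} {P : Set (Fin m → ℝ)} (hP : IsLatticePolytope P) :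
    P.Nonempty := by
  obtain ⟨V, hV, -, rfl⟩ := hP
  exact convexHull_nonempty_iff.2 (by simpa using hV)

def latticePoints (m : ℕ) : AddSubgroup (Fin m → ℝ) where
  carrier := {v | IsLatticePoint v}
  add_mem' {u w} hu hw i := by
    obtain ⟨a, ha⟩ := hu i
    obtain ⟨b, hb⟩ := hw i
    exact ⟨a + b, by simp [ha, hb]⟩
  zero_mem' _ := ⟨0, by simp⟩
  neg_mem' {u} hu i := by
    obtain ⟨a, ha⟩ := hu i
    exact ⟨-a, by simp [ha]⟩

theorem exists_intCast_eq_of_mem_latticePoints {m : ℕ} {w : Fin m → ℝ}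
    (hw : w ∈ latticePoints m) : ∃ z : Fin m → ℤ, (fun i => (z i : ℝ)) = w :=
  ⟨fun i => (hw i).choose, funext fun i => (hw i).choose_spec.symm⟩

theorem apply_ne_of_mem_interior_hull {m : ℕ} {h : StrongDual ℝ (Fin m → ℝ)}
    {P : Set (Fin m → ℝ)} (hP : IsLatticePolytope P) (hP1 : ∀ p ∈ P, h p = 1) {k : ℕ}
    (hk : ∀ z : Fin m → ℤ, (fun i => (z i : ℝ)) ∉ intrinsicInterior ℝ ((k : ℝ) • P))
    {w : Fin m → ℝ} (hw : w ∈ interior (PointedCone.hull ℝ P : Set (Fin m → ℝ)))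
    (hwlat : w ∈ latticePoints m) : h w ≠ k := by
  intro hwk
  obtain ⟨z, rfl⟩ := exists_intCast_eq_of_mem_latticePoints hwlat
  rcases k.eq_zero_or_pos with rfl | hkpos
  · refine hk 0 ?_
    rw [Nat.cast_zero, Set.zero_smul_set hP.nonempty, ← Set.singleton_zero,
      intrinsicInterior_singleton]
    exact funext fun _ => Int.cast_zero
  · exact hk z (mem_intrinsicInterior_of_mem_interior_hull hP1 hP.convex (by positivity) hw hwk)

theorem Finset.card_filter_eq_zero_add_sum_le {ι : Type*} [Fintype ι] {a : ι → ℝ}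
    (ha : ∀ i, a i ≤ 1) :
    ((Finset.univ.filter fun i => a i = 0).card : ℝ) + ∑ i, a i ≤ Fintype.card ι := by
  have hsum : ∑ i, a i ≤ (Finset.univ.filter fun i => a i ≠ 0).card := by
    rw [← Finset.sum_filter_ne_zero]
    simpa using Finset.sum_le_card_nsmul _ a 1 fun i _ => ha i
  have hcard := Finset.card_filter_add_card_filter_not (s := Finset.univ) fun i => a i = 0
  rw [Finset.card_univ] at hcard
  rw [← hcard, Nat.cast_add]
  linarith

section InteriorLatticePoints

variable {m : ℕ} {ι : Type*} [Fintype ι] {h : StrongDual ℝ (Fin m → ℝ)}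
  {C : PointedCone ℝ (Fin m → ℝ)} {v : ι → Fin m → ℝ} {a : ι → ℝ} {k : ℕ}

theorem apply_sum_smul (hv1 : ∀ i, h (v i) = 1) (c : ι → ℝ) :
    h (∑ i, c i • v i) = ∑ i, c i := by
  simp [hv1]

variable (hv : ∀ i, v i ∈ C) (hvlat : ∀ i, v i ∈ latticePoints m) (hv1 : ∀ i, h (v i) = 1)
  (hno : ∀ w ∈ interior (C : Set (Fin m → ℝ)), w ∈ latticePoints m → h w ≠ k)
  (ha : ∑ i, a i • v i ∈ interior (C : Set (Fin m → ℝ)))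
  (halat : ∑ i, a i • v i ∈ latticePoints m) (hsum : ∑ i, a i = k + 1) (ha0 : ∀ i, 0 ≤ a i)
include hv hvlat hv1 hno ha halat hsum ha0

theorem ncard_one_le_neg_le_ncard_zero_pos {e : ι → ℝ} (he : ∑ i, e i • v i ∈ C) :
    {i | 1 ≤ a i ∧ e i < 0}.ncard ≤ {i | a i = 0 ∧ 0 < e i}.ncard := by
  classical
  simp only [Set.ncard_eq_toFinset_card', Set.toFinset_ofPred]
  set V := Finset.univ.filter fun i => 1 ≤ a i ∧ e i < 0
  set Z := Finset.univ.filter fun i => a i = 0 ∧ 0 < e i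
  by_contra! hlt
  obtain ⟨W, hWV, hWcard⟩ := Finset.exists_subset_card_eq (show Z.card + 1 ≤ V.card from hlt)
  have hW : ∀ i ∈ W, 1 ≤ a i ∧ e i < 0 := fun i hi => (Finset.mem_filter.1 (hWV hi)).2
  have hZ : ∀ i ∈ Z, a i = 0 ∧ 0 < e i := fun i hi => (Finset.mem_filter.1 hi).2
  set c : ι → ℝ := fun i => a i + (if i ∈ Z then 1 else 0) - (if i ∈ W then 1 else 0)
  have hc : ∑ i, c i • v i = ∑ i, a i • v i + ∑ i ∈ Z, v i - ∑ i ∈ W, v i := by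
    simp [c, add_smul, sub_smul, Finset.sum_add_distrib, Finset.sum_sub_distrib, ite_smul]
  have hc0 : ∀ i, 0 ≤ c i := fun i => by
    by_cases hiW : i ∈ W
    · have := (hW i hiW).1
      simp only [c, hiW, if_true]
      split_ifs <;> linarith
    · simp only [c, hiW, if_false]
      split_ifs <;> linarith [ha0 i]
  have hzero : ∀ i, c i = 0 → e i ≤ 0 ∧ (0 < a i → e i < 0) := fun i hci => by
    by_cases hiW : i ∈ W
    · exact ⟨(hW i hiW).2.le, fun _ => (hW i hiW).2⟩
    by_cases hiZ : i ∈ Z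
    · simp [c, hiW, hiZ, (hZ i hiZ).1] at hci
    simp only [c, hiW, hiZ, if_false, add_zero, sub_zero] at hci
    refine ⟨le_of_not_gt fun hei => hiZ (Finset.mem_filter.2 ⟨Finset.mem_univ i, hci, hei⟩), ?_⟩
    simp [hci]
  apply hno _ (PointedCone.sum_smul_mem_interior hv ha he hc0 hzero)
  · rw [hc]
    exact sub_mem (add_mem halat (sum_mem fun i _ => hvlat i)) (sum_mem fun i _ => hvlat i)
  · rw [apply_sum_smul hv1]
    simp only [c, Finset.sum_sub_distrib, Finset.sum_add_distrib, hsum, Finset.sum_ite_mem,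
      Finset.univ_inter, Finset.sum_const, nsmul_eq_mul, mul_one, hWcard, Nat.cast_add,
      Nat.cast_one]
    ring

theorem ncard_eq_zero_add_le : {i | a i = 0}.ncard + k + 1 ≤ Fintype.card ι := by
  classical
  by_cases hbig : ∃ i, 1 < a i
  · exfalso
    obtain ⟨i, hi⟩ := hbig
    set c : ι → ℝ := fun j => a j - if j = i then 1 else 0
    have hc : ∑ j, c j • v j = ∑ j, a j • v j - v i := by
      simp [c, sub_smul, Finset.sum_sub_distrib, ite_smul]
    have hc0 : ∀ j, 0 ≤ c j := fun j => by
      simp only [c]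
      split_ifs with hj
      · subst hj; linarith
      · linarith [ha0 j]
    have hzero : ∀ j, c j = 0 → (0 : ℝ) ≤ 0 ∧ (0 < a j → (0 : ℝ) < 0) := fun j hcj => by
      by_cases hj : j = i
      · subst hj
        simp only [c, if_true] at hcj
        linarith
      · simp only [c, hj, if_false, sub_zero] at hcj
        simp [hcj]
    apply hno _ (PointedCone.sum_smul_mem_interior (e := 0) hv ha (by simp) hc0 hzero)
    · rw [hc]
      exact sub_mem halat (hvlat i)
    · rw [apply_sum_smul hv1]
      simp [c, Finset.sum_sub_distrib, hsum]
  · push Not at hbig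
    have := Finset.card_filter_eq_zero_add_sum_le hbig
    rw [hsum, ← add_assoc] at this
    rw [Set.ncard_eq_toFinset_card', Set.toFinset_ofPred]
    exact_mod_cast this

end InteriorLatticePoints

theorem statement6_general (n d : ℕ) (P : Set (Fin (n + 1) → ℝ))
    (v : Fin (n + 1) → Fin (n + 1) → ℝ) (b : (Fin (n + 1) → ℝ) → Fin (n + 1) → ℝ)
    (x : Fin (n + 1) → ℝ)
    (hP : IsLatticePolytope P)
    (hPdim : Module.finrank ℝ (vectorSpan ℝ P) = n)
    (hheight : ∀ p ∈ P, p (Fin.last n) = 1)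
    (hNoInt : ∀ z : Fin (n + 1) → ℤ,
      (fun i => (z i : ℝ)) ∉ intrinsicInterior ℝ (((n - d : ℕ) : ℝ) • P))
    (hxint : IsLatticePoint x)
    (hxmem : x ∈ intrinsicInterior ℝ (((n - d + 1 : ℕ) : ℝ) • P))
    (hvint : ∀ i, IsLatticePoint (v i))
    (hvmem : ∀ i, v i ∈ P)
    (hb : ∀ y : Fin (n + 1) → ℝ, y = ∑ i, b y i • v i)
    (hxcone : ∀ i, 0 ≤ b x i)
    (y : Fin (n + 1) → ℝ)
    (hy : ∃ c : ℝ, 0 ≤ c ∧ ∃ p ∈ P, y = c • p) :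
    Set.ncard {j : Fin (n + 1) | (∃ m : ℤ, 0 < m ∧ b x j = (m : ℝ)) ∧ b y j < 0} ≤
        Set.ncard {i : Fin (n + 1) | b x i = 0 ∧ 0 < b y i} ∧
      Set.ncard {j : Fin (n + 1) | (∃ m : ℤ, 0 < m ∧ b x j = (m : ℝ)) ∧ b y j < 0} ≤
        Set.ncard {i : Fin (n + 1) | b x i = 0} ∧
      Set.ncard {i : Fin (n + 1) | b x i = 0} ≤ d := by
  set σ := PointedCone.hull ℝ P
  set h : StrongDual ℝ (Fin (n + 1) → ℝ) := ContinuousLinearMap.proj (Fin.last n)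
  have hP1 : ∀ p ∈ P, h p = 1 := hheight
  have hv1 : ∀ i, h (v i) = 1 := fun i => hP1 _ (hvmem i)
  have hσv : ∀ i, v i ∈ σ := fun i => PointedCone.subset_hull (hvmem i)
  have hspan := vectorSpan_eq_ker_of_finrank hP1 hP.nonempty (by simp [hPdim])
  have hx : ∑ i, b x i • v i ∈ interior (σ : Set _) :=
    hb x ▸ mem_interior_hull_of_mem_intrinsicInterior hP1 hspan (by positivity) hxmem
  have hsum : ∑ i, b x i = (n - d : ℕ) + 1 := by
    rw [← apply_sum_smul hv1, ← hb x, apply_eq_of_mem_affineSpan_smul hP1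
      (subset_affineSpan ℝ _ (intrinsicInterior_subset hxmem))]
    push_cast
    ring
  have hy : ∑ i, b y i • v i ∈ σ := by
    obtain ⟨c, hc, p, hp, rfl⟩ := hy
    exact hb (c • p) ▸ σ.smul_mem hc (PointedCone.subset_hull hp)
  have hno := fun w => apply_ne_of_mem_interior_hull (w := w) hP hP1 hNoInt
  have hV : {j | (∃ m : ℤ, 0 < m ∧ b x j = m) ∧ b y j < 0}.ncard ≤
      {i | b x i = 0 ∧ 0 < b y i}.ncard := by
    refine (Set.ncard_le_ncard (t := {j | 1 ≤ b x j ∧ b y j < 0}) ?_).trans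
      (ncard_one_le_neg_le_ncard_zero_pos hσv hvint hv1 hno hx (hb x ▸ hxint) hsum hxcone hy)
    rintro j ⟨⟨m, hm, hj⟩, hyj⟩
    exact ⟨hj ▸ by exact_mod_cast hm, hyj⟩
  have hZ := ncard_eq_zero_add_le hσv hvint hv1 hno hx (hb x ▸ hxint) hsum hxcone
  rw [Fintype.card_fin] at hZ
  exact ⟨hV, hV.trans (Set.ncard_le_ncard fun i hi => hi.1), by omega⟩

/-- (Lemma 2.4 / `bound V-`.) For any point `y` in the cone `σ` spanned
by `P`, one has `|V⁻(y)| ≤ |Z⁺(y)|`; in particular `|V⁻(y)| ≤ |Z| ≤ d`.  Here `Z` is the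
set of indices `i` with `b_i(x) = 0`, `V` the set of indices `j` with `b_j(x)` a positive
integer, and `Z⁺(y)`, `V⁻(y)` the subsets where `b_i(y) > 0`, resp. `b_j(y) < 0`. -/
theorem statement6 (n d : ℕ) (P : Set (Fin (n + 1) → ℝ))
    (v : Fin (n + 1) → Fin (n + 1) → ℝ) (b : (Fin (n + 1) → ℝ) → Fin (n + 1) → ℝ)
    (x : Fin (n + 1) → ℝ)
    (hP : IsLatticePolytope P)
    (hPdim : Module.finrank ℝ (vectorSpan ℝ P) = n)
    (hheight : ∀ p ∈ P, p (Fin.last n) = 1)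
    (hdn : d ≤ n)
    (hNoInt : ∀ z : Fin (n + 1) → ℤ,
      (fun i => (z i : ℝ)) ∉ intrinsicInterior ℝ (((n - d : ℕ) : ℝ) • P))
    (hxint : IsLatticePoint x)
    (hxmem : x ∈ intrinsicInterior ℝ (((n - d + 1 : ℕ) : ℝ) • P))
    (hvint : ∀ i, IsLatticePoint (v i))
    (hvmem : ∀ i, v i ∈ P)
    (hvaff : AffineIndependent ℝ v)
    (hb : ∀ y : Fin (n + 1) → ℝ, y = ∑ i, b y i • v i)
    (hxcone : ∀ i, 0 ≤ b x i)
    (y : Fin (n + 1) → ℝ)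
    (hy : ∃ c : ℝ, 0 ≤ c ∧ ∃ p ∈ P, y = c • p) :
    Set.ncard {j : Fin (n + 1) | (∃ m : ℤ, 0 < m ∧ b x j = (m : ℝ)) ∧ b y j < 0} ≤
        Set.ncard {i : Fin (n + 1) | b x i = 0 ∧ 0 < b y i} ∧
      Set.ncard {j : Fin (n + 1) | (∃ m : ℤ, 0 < m ∧ b x j = (m : ℝ)) ∧ b y j < 0} ≤
        Set.ncard {i : Fin (n + 1) | b x i = 0} ∧
      Set.ncard {i : Fin (n + 1) | b x i = 0} ≤ d :=
  statement6_general n d P v b x hP hPdim hheight hNoInt hxint hxmem hvint hvmem hb hxcone y hy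
end
end
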